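/- Let (x_i)_{i≥1} be a P-greedy sequence of points: setting X_0 := ∅ and X_i := {x_1,…,x_i}, for every i ≥ 0 and every z ∈ Ω one has P_{X_i}(z) ≤ P_{X_i}(x_{i+1}). Suppose there exist C > 0 and ρ > 0 such that for every n ≥ 1 the closed absolutely convex hull acx(Φ(Ω)) admits an (n, C·n^{−ρ−1/2})-cover. Then for every n ≥ 1: sup_{z ∈ Ω} P_{X_{2n}}(z) ≤ √5 · C · 2^{ρ} · (2n)^{−ρ}. -/

import Mathlib

/-!
Gram–Schmidt applied to `Φ(x_1), …, Φ(x_N)` yields orthonormal (normalised Newton) vectors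
`e_j`, and in these coordinates the map `c ↦ ∑ c_j Φ(x_j)` is upper triangular with diagonal
the greedy errors `P_{X_{j-1}}(x_j)`. This map sends the `ℓ¹` unit ball of `ℝ^N` into
`acx Φ(Ω)`, and the coordinate map is `1`-Lipschitz, so an `(N, ε)`-cover of `acx Φ(Ω)`
covers its image by `2^N` balls of radius `ε`. Comparing volumes,
`∏ P_{X_{j-1}}(x_j) · 2^N / N! ≤ 2^N ε^N |B_N|`. The greedy errors decrease and dominate
`sup P_{X_N}`; for `N = 2n`, `|B_N| = π^n / n!` and `(2n)! ≤ (2n)^n n!`, so taking `N`-th roots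
gives `sup P_{X_N} ≤ √(πN) ε ≤ √(5N) ε`.
-/

open scoped RealInnerProductSpace

variable {H : Type*} [NormedAddCommGroup H] [InnerProductSpace ℝ H] {Ω : Type*}

/-- The kernel interpolant `I_X f`: the orthogonal projection of `f` onto
`V(X) = span {Φ(x) : x ∈ X}`. -/
noncomputable def interp (Φ : Ω → H) (X : Finset Ω) (f : H) : H :=
  haveI : FiniteDimensional ℝ (Submodule.span ℝ (Φ '' (X : Set Ω))) :=
    FiniteDimensional.span_of_finite ℝ (X.finite_toSet.image Φ)
  (Submodule.orthogonalProjection (Submodule.span ℝ (Φ '' (X : Set Ω))) f : H)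

/-- The power function `P_X(z) = ‖Φ(z) − Π_{V(X)} Φ(z)‖`. -/
noncomputable def powerFun (Φ : Ω → H) (X : Finset Ω) (z : Ω) : ℝ :=
  ‖Φ z - interp Φ X (Φ z)‖

/-- The sup norm `‖g‖_∞ = sup_{x ∈ Ω} |g(x)|`, where `g(x) = ⟪g, Φ(x)⟫`. -/
noncomputable def supNorm (Φ : Ω → H) (g : H) : ℝ := ⨆ x : Ω, |⟪g, Φ x⟫|

/-- `X_i = {x_1, …, x_i}` (so `X_0 = ∅`). -/
noncomputable def Xset (x : ℕ → Ω) (i : ℕ) : Finset Ω := by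
  classical exact (Finset.Icc 1 i).image x

/-- The closed absolutely convex (symmetric convex) hull of `K`. -/
def acx (K : Set H) : Set H :=
  closure {y : H | ∃ (m : ℕ) (c : Fin m → ℝ) (g : Fin m → H),
    (∀ j, g j ∈ K) ∧ (∑ j, |c j|) ≤ 1 ∧ y = ∑ j, c j • g j}

/-- `S` admits an `(n, ε)`-cover: it can be covered by at most `2^n` closed balls of
radius `ε`. -/
def HasCover (S : Set H) (n : ℕ) (ε : ℝ) : Prop :=
  ∃ (q : ℕ) (y : Fin q → H), q ≤ 2 ^ n ∧ S ⊆ ⋃ j, Metric.closedBall (y j) ε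

open MeasureTheory

section FeatureSpan

variable (Φ : Ω → H)

noncomputable def featureSpan (X : Finset Ω) : Submodule ℝ H :=
  Submodule.span ℝ (Φ '' (X : Set Ω))

instance (X : Finset Ω) : FiniteDimensional ℝ (featureSpan Φ X) :=
  FiniteDimensional.span_of_finite ℝ (X.finite_toSet.image Φ)

variable {Φ}

theorem featureSpan_mono {X Y : Finset Ω} (h : X ⊆ Y) : featureSpan Φ X ≤ featureSpan Φ Y :=
  Submodule.span_mono (Set.image_mono (by exact_mod_cast h))

theorem apply_mem_featureSpan {X : Finset Ω} {z : Ω} (hz : z ∈ X) : Φ z ∈ featureSpan Φ X :=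
  Submodule.subset_span ⟨z, hz, rfl⟩

theorem interp_eq_starProjection (X : Finset Ω) (f : H) :
    interp Φ X f = (featureSpan Φ X).starProjection f :=
  rfl

theorem interp_mem_featureSpan (X : Finset Ω) (f : H) : interp Φ X f ∈ featureSpan Φ X :=
  Submodule.starProjection_apply_mem _ f

theorem sub_interp_mem_orthogonal (X : Finset Ω) (f : H) :
    f - interp Φ X f ∈ (featureSpan Φ X)ᗮ :=
  Submodule.sub_starProjection_mem_orthogonal f

theorem norm_sub_interp_le {X : Finset Ω} {w : H} (hw : w ∈ featureSpan Φ X) (f : H) :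
    ‖f - interp Φ X f‖ ≤ ‖f - w‖ := by
  rw [interp_eq_starProjection, Submodule.starProjection_minimal]
  exact ciInf_le ⟨0, by rintro _ ⟨_, rfl⟩; exact norm_nonneg _⟩
    (⟨w, hw⟩ : featureSpan Φ X)

theorem powerFun_anti {X Y : Finset Ω} (h : X ⊆ Y) (z : Ω) :
    powerFun Φ Y z ≤ powerFun Φ X z :=
  norm_sub_interp_le (featureSpan_mono h (interp_mem_featureSpan X (Φ z))) (Φ z)

end FeatureSpan

theorem Xset_mono (x : ℕ → Ω) : Monotone (Xset x) := fun _ _ h => by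
  classical
  simpa [Xset] using Finset.image_subset_image (Finset.Icc_subset_Icc_right h)

theorem mem_Xset (x : ℕ → Ω) {k i : ℕ} (hk : 1 ≤ k) (hki : k ≤ i) :
    x k ∈ Xset x i := by
  classical
  exact Finset.mem_image.mpr ⟨k, Finset.mem_Icc.mpr ⟨hk, hki⟩, rfl⟩

section NewtonResidual

variable (Φ : Ω → H) (x : ℕ → Ω)

noncomputable def newtonResidual (i : ℕ) : H :=
  Φ (x (i + 1)) - interp Φ (Xset x i) (Φ (x (i + 1)))

variable {Φ x}

theorem norm_newtonResidual (i : ℕ) :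
    ‖newtonResidual Φ x i‖ = powerFun Φ (Xset x i) (x (i + 1)) :=
  rfl

theorem apply_mem_featureSpan_Xset {j i : ℕ} (h : j < i) :
    Φ (x (j + 1)) ∈ featureSpan Φ (Xset x i) :=
  apply_mem_featureSpan (mem_Xset x (Nat.succ_pos j) h)

theorem newtonResidual_mem_featureSpan {j i : ℕ} (h : j < i) :
    newtonResidual Φ x j ∈ featureSpan Φ (Xset x i) :=
  Submodule.sub_mem _ (apply_mem_featureSpan_Xset h)
    (featureSpan_mono (Xset_mono x h.le) (interp_mem_featureSpan _ _))

theorem inner_newtonResidual_eq_zero {i : ℕ} {v : H} (hv : v ∈ featureSpan Φ (Xset x i)) :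
    ⟪newtonResidual Φ x i, v⟫ = 0 :=
  Submodule.inner_left_of_mem_orthogonal hv (sub_interp_mem_orthogonal _ _)

theorem inner_newtonResidual_self_apply (i : ℕ) :
    ⟪newtonResidual Φ x i, Φ (x (i + 1))⟫ = ‖newtonResidual Φ x i‖ ^ 2 := by
  have hsplit : Φ (x (i + 1)) = newtonResidual Φ x i + interp Φ (Xset x i) (Φ (x (i + 1))) :=
    (sub_add_cancel _ _).symm
  conv_lhs => rw [hsplit]
  rw [inner_add_right, inner_newtonResidual_eq_zero (interp_mem_featureSpan _ _), add_zero,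
    real_inner_self_eq_norm_sq]

theorem orthonormal_normalize_newtonResidual {N : ℕ}
    (h : ∀ i < N, newtonResidual Φ x i ≠ 0) :
    Orthonormal ℝ fun i : Fin N =>
      ‖newtonResidual Φ x i‖⁻¹ • newtonResidual Φ x i := by
  refine ⟨fun i => norm_smul_inv_norm (h i i.2), fun i j hij => ?_⟩
  have key : ⟪newtonResidual Φ x i, newtonResidual Φ x j⟫ = 0 := by
    rcases lt_or_gt_of_ne (Fin.val_ne_of_ne hij) with hlt | hlt
    · rw [real_inner_comm]
      exact inner_newtonResidual_eq_zero (newtonResidual_mem_featureSpan hlt)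
    · exact inner_newtonResidual_eq_zero (newtonResidual_mem_featureSpan hlt)
  simp only [real_inner_smul_left, real_inner_smul_right, key, mul_zero]

end NewtonResidual

section Covering

variable {ι : Type*}

noncomputable def innerCoords (e : ι → H) : H →ₗ[ℝ] EuclideanSpace ℝ ι :=
  (WithLp.linearEquiv 2 ℝ (ι → ℝ)).symm.toLinearMap ∘ₗ
    LinearMap.pi fun i => innerₛₗ ℝ (e i)

@[simp]
theorem innerCoords_apply (e : ι → H) (a : H) (i : ι) : innerCoords e a i = ⟪e i, a⟫ :=
  rfl

variable [Fintype ι]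

theorem norm_innerCoords_le {e : ι → H} (he : Orthonormal ℝ e) (a : H) :
    ‖innerCoords e a‖ ≤ ‖a‖ := by
  rw [EuclideanSpace.norm_eq, Real.sqrt_le_left (norm_nonneg a)]
  exact he.sum_inner_products_le a

theorem innerCoords_sum_smul [DecidableEq ι] (e g : ι → H) (c : EuclideanSpace ℝ ι) :
    innerCoords e (∑ j, c j • g j)
      = Matrix.toLpLin 2 2 (Matrix.of fun i j => ⟪e i, g j⟫) c := by
  ext i
  simp [Matrix.toLpLin_apply, Matrix.mulVec, dotProduct, mul_comm]

theorem volume_l1Ball [Nonempty ι] :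
    volume {c : EuclideanSpace ℝ ι | ∑ i, |c i| ≤ 1}
      = ENNReal.ofReal (2 ^ Fintype.card ι / (Fintype.card ι).factorial) := by
  have h := volume_sum_rpow_le (ι := ι) le_rfl 1
  simp only [Real.rpow_one, div_one] at h
  rw [← (PiLp.volume_preserving_toLp ι).measure_preimage]
  · simp only [Set.preimage, Set.mem_ofPred_eq]
    rw [h, Real.Gamma_nat_eq_factorial]
    norm_num
  · exact (isClosed_le (by fun_prop) continuous_const).measurableSet.nullMeasurableSet

-- `√π ^ N / Γ(N / 2 + 1)` is the volume of the unit ball of `ℝ^N`.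
theorem abs_det_mul_le_of_image_l1Ball_subset [Nonempty ι] [DecidableEq ι] (A : Matrix ι ι ℝ)
    {q : ℕ} (y : Fin q → EuclideanSpace ℝ ι) {ε : ℝ} (hε : 0 ≤ ε)
    (hA : Matrix.toLpLin 2 2 A '' {c | ∑ i, |c i| ≤ 1} ⊆ ⋃ j, Metric.closedBall (y j) ε) :
    |A.det| * (2 ^ Fintype.card ι / (Fintype.card ι).factorial)
      ≤ q * (ε ^ Fintype.card ι
        * (√Real.pi ^ Fintype.card ι / Real.Gamma (Fintype.card ι / 2 + 1))) := by
  rw [← ENNReal.ofReal_le_ofReal_iff (by positivity), ENNReal.ofReal_mul (abs_nonneg _),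
    ← volume_l1Ball, ← LinearMap.det_toLpLin 2, ← Measure.addHaar_image_linearMap]
  calc volume (Matrix.toLpLin 2 2 A '' {c | ∑ i, |c i| ≤ 1})
      ≤ ∑ j, volume (Metric.closedBall (y j) ε) :=
        (measure_mono hA).trans (measure_iUnion_fintype_le _ _)
    _ = _ := by
        simp only [EuclideanSpace.volume_closedBall, Finset.sum_const, Finset.card_univ,
          Fintype.card_fin, nsmul_eq_mul]
        rw [ENNReal.ofReal_mul (Nat.cast_nonneg _), ENNReal.ofReal_mul (by positivity),
          ENNReal.ofReal_pow hε, ENNReal.ofReal_natCast]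

theorem sum_smul_mem_acx {K : Set H} {g : ι → H} (hg : ∀ i, g i ∈ K) {c : ι → ℝ}
    (hc : ∑ i, |c i| ≤ 1) : ∑ i, c i • g i ∈ acx K := by
  let σ := Fintype.equivFin ι
  refine subset_closure ⟨_, c ∘ σ.symm, g ∘ σ.symm, fun j => hg _, ?_, ?_⟩
  · rwa [← σ.symm.sum_comp (fun i => |c i|)] at hc
  · simp only [Function.comp_apply, σ.symm.sum_comp (fun i => c i • g i)]

theorem abs_det_inner_le_of_hasCover [Nonempty ι] [DecidableEq ι] {K : Set H} {e g : ι → H}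
    (he : Orthonormal ℝ e) (hg : ∀ i, g i ∈ K) {ε : ℝ} (hε : 0 ≤ ε)
    (hcov : HasCover (acx K) (Fintype.card ι) ε) :
    |(Matrix.of fun i j => ⟪e i, g j⟫).det|
      ≤ (Fintype.card ι).factorial * (ε ^ Fintype.card ι
        * (√Real.pi ^ Fintype.card ι / Real.Gamma (Fintype.card ι / 2 + 1))) := by
  obtain ⟨q, y, hq, hcover⟩ := hcov
  have himage : Matrix.toLpLin 2 2 (Matrix.of fun i j => ⟪e i, g j⟫) '' {c | ∑ i, |c i| ≤ 1}
      ⊆ ⋃ j, Metric.closedBall (innerCoords e (y j)) ε := by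
    rintro _ ⟨c, hc, rfl⟩
    obtain ⟨j, hj⟩ := Set.mem_iUnion.mp (hcover (sum_smul_mem_acx hg hc))
    refine Set.mem_iUnion.mpr ⟨j, ?_⟩
    rw [Metric.mem_closedBall, dist_eq_norm, ← innerCoords_sum_smul, ← map_sub] at *
    exact (norm_innerCoords_le he _).trans hj
  have h := (abs_det_mul_le_of_image_l1Ball_subset _ _ hε himage).trans
    (mul_le_mul_of_nonneg_right (Nat.cast_le.mpr hq) (by positivity))
  have hfac : (0 : ℝ) < (Fintype.card ι).factorial := by positivity
  rw [Nat.cast_pow, Nat.cast_ofNat, mul_div_assoc', div_le_iff₀ hfac, mul_comm] at h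
  exact le_of_mul_le_mul_left (by linarith) (by positivity : (0 : ℝ) < 2 ^ Fintype.card ι)

end Covering

theorem two_mul_factorial_le (n : ℕ) : (2 * n).factorial ≤ (2 * n) ^ n * n.factorial := by
  have h := Nat.factorial_mul_descFactorial (show n ≤ 2 * n by omega)
  rw [show 2 * n - n = n by omega] at h
  rw [← h, mul_comm]
  exact Nat.mul_le_mul_right _ (Nat.descFactorial_le_pow _ _)

theorem two_mul_factorial_mul_sqrt_pi_pow_div_gamma_le (n : ℕ) :
    ((2 * n).factorial : ℝ) * (√Real.pi ^ (2 * n) / Real.Gamma ((2 * n : ℕ) / 2 + 1))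
      ≤ √(5 * (2 * n : ℕ)) ^ (2 * n) := by
  have hΓ : Real.Gamma ((2 * n : ℕ) / 2 + 1) = n.factorial := by
    rw [← Real.Gamma_nat_eq_factorial]; push_cast; ring_nf
  rw [hΓ, pow_mul, pow_mul, Real.sq_sqrt Real.pi_pos.le, Real.sq_sqrt (by positivity), mul_pow,
    mul_div_assoc', div_le_iff₀ (by positivity)]
  have hfac : ((2 * n).factorial : ℝ) ≤ ((2 * n : ℕ) : ℝ) ^ n * n.factorial := by
    exact_mod_cast two_mul_factorial_le n
  have hpi : Real.pi ^ n ≤ 5 ^ n :=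
    pow_le_pow_left₀ Real.pi_pos.le (by linarith [Real.pi_lt_four]) n
  calc ((2 * n).factorial : ℝ) * Real.pi ^ n
      ≤ ((2 * n : ℕ) : ℝ) ^ n * n.factorial * 5 ^ n := by gcongr
    _ = _ := by ring

section Greedy

variable {Φ : Ω → H} {x : ℕ → Ω}

theorem det_inner_normalize_newtonResidual {N : ℕ} (h : ∀ i < N, newtonResidual Φ x i ≠ 0) :
    (Matrix.of fun i j : Fin N =>
        ⟪‖newtonResidual Φ x i‖⁻¹ • newtonResidual Φ x i, Φ (x (j + 1))⟫).det
      = ∏ i : Fin N, ‖newtonResidual Φ x i‖ := by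
  rw [Matrix.det_of_isUpperTriangular]
  · refine Finset.prod_congr rfl fun i _ => ?_
    rw [Matrix.of_apply, real_inner_smul_left, inner_newtonResidual_self_apply, sq,
      inv_mul_cancel_left₀ (norm_ne_zero_iff.mpr (h i i.2))]
  · intro i j hji
    rw [Matrix.of_apply, real_inner_smul_left,
      inner_newtonResidual_eq_zero (apply_mem_featureSpan_Xset (show (j : ℕ) < i from hji)),
      mul_zero]

theorem prod_powerFun_le_of_hasCover {N : ℕ} (hN : 0 < N) {ε : ℝ} (hε : 0 ≤ ε)
    (hcov : HasCover (acx (Set.range Φ)) N ε) :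
    ∏ i : Fin N, powerFun Φ (Xset x i) (x (i + 1))
      ≤ N.factorial * (ε ^ N * (√Real.pi ^ N / Real.Gamma (N / 2 + 1))) := by
  have : Nonempty (Fin N) := ⟨⟨0, hN⟩⟩
  by_cases h : ∃ i < N, newtonResidual Φ x i = 0
  · obtain ⟨i, hi, hzero⟩ := h
    rw [Finset.prod_eq_zero (Finset.mem_univ ⟨i, hi⟩)
      (by rw [← norm_newtonResidual, hzero, norm_zero])]
    positivity
  · have hne : ∀ i < N, newtonResidual Φ x i ≠ 0 := fun i hi hzero => h ⟨i, hi, hzero⟩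
    have hdet := abs_det_inner_le_of_hasCover (orthonormal_normalize_newtonResidual hne)
      (fun j : Fin N => Set.mem_range_self (x (j + 1))) hε (by rwa [Fintype.card_fin])
    simp only [det_inner_normalize_newtonResidual hne, Fintype.card_fin] at hdet
    exact (le_abs_self _).trans hdet

variable (hgreedy : ∀ (i : ℕ) (z : Ω),
  powerFun Φ (Xset x i) z ≤ powerFun Φ (Xset x i) (x (i + 1)))
include hgreedy

theorem antitone_powerFun_greedy : Antitone fun i => powerFun Φ (Xset x i) (x (i + 1)) :=
  antitone_nat_of_succ_le fun i =>
    (powerFun_anti (Xset_mono x i.le_succ) _).trans (hgreedy i _)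

theorem iSup_powerFun_greedy_le {n : ℕ} (hn : 1 ≤ n) {ε : ℝ} (hε : 0 ≤ ε)
    (hcov : HasCover (acx (Set.range Φ)) (2 * n) ε) :
    ⨆ z, powerFun Φ (Xset x (2 * n)) z ≤ √(5 * (2 * n : ℕ)) * ε := by
  set σ := fun i => powerFun Φ (Xset x i) (x (i + 1))
  obtain ⟨m, hm⟩ : ∃ m, 2 * n = m + 1 := ⟨2 * n - 1, by omega⟩
  have hlast : σ m ^ (2 * n) ≤ (√(5 * (2 * n : ℕ)) * ε) ^ (2 * n) := by
    calc σ m ^ (2 * n) = ∏ _i : Fin (2 * n), σ m := by simp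
      _ ≤ ∏ i : Fin (2 * n), σ i :=
        Finset.prod_le_prod (fun _ _ => norm_nonneg _)
          fun i _ => antitone_powerFun_greedy hgreedy (by omega)
      _ ≤ _ := prod_powerFun_le_of_hasCover (by omega) hε hcov
      _ ≤ _ := by
        rw [mul_pow, mul_left_comm, mul_comm _ (ε ^ _)]
        exact mul_le_mul_of_nonneg_left (two_mul_factorial_mul_sqrt_pi_pow_div_gamma_le n)
          (by positivity)
  refine Real.iSup_le (fun z => ?_) (by positivity)
  calc powerFun Φ (Xset x (2 * n)) z ≤ powerFun Φ (Xset x m) z :=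
        powerFun_anti (Xset_mono x (by omega)) z
    _ ≤ σ m := hgreedy m z
    _ ≤ _ := le_of_pow_le_pow_left₀ (by omega) (by positivity) hlast

end Greedy

theorem statement_12_general
    (Φ : Ω → H)
    (x : ℕ → Ω)
    (hgreedy : ∀ (i : ℕ) (z : Ω),
      powerFun Φ (Xset x i) z ≤ powerFun Φ (Xset x i) (x (i + 1)))
    (C ρ : ℝ) (hC : 0 < C) (hρ : 0 < ρ)
    (hcov : ∀ n : ℕ, 1 ≤ n →
      HasCover (acx (Set.range Φ)) n (C * (n : ℝ) ^ (-ρ - 1 / 2))) :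
    ∀ n : ℕ, 1 ≤ n →
      (⨆ z : Ω, powerFun Φ (Xset x (2 * n)) z)
        ≤ Real.sqrt 5 * C * (2 : ℝ) ^ ρ * ((2 * n : ℕ) : ℝ) ^ (-ρ) := by
  intro n hn
  have hN : (0 : ℝ) < (2 * n : ℕ) := by exact_mod_cast (by omega : 0 < 2 * n)
  have hrate : √(5 * (2 * n : ℕ)) * (C * ((2 * n : ℕ) : ℝ) ^ (-ρ - 1 / 2))
      = √5 * C * ((2 * n : ℕ) : ℝ) ^ (-ρ) := by
    rw [Real.sqrt_mul (by norm_num), Real.sqrt_eq_rpow ((2 * n : ℕ) : ℝ), mul_mul_mul_comm,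
      ← Real.rpow_add hN]
    ring_nf
  calc ⨆ z, powerFun Φ (Xset x (2 * n)) z
      ≤ √(5 * (2 * n : ℕ)) * (C * ((2 * n : ℕ) : ℝ) ^ (-ρ - 1 / 2)) :=
        iSup_powerFun_greedy_le hgreedy hn (by positivity) (hcov (2 * n) (by omega))
    _ = √5 * C * ((2 * n : ℕ) : ℝ) ^ (-ρ) := hrate
    _ ≤ √5 * C * 2 ^ ρ * ((2 * n : ℕ) : ℝ) ^ (-ρ) := by
        have h2ρ : (1 : ℝ) ≤ 2 ^ ρ := Real.one_le_rpow (by norm_num) hρ.le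
        exact mul_le_mul_of_nonneg_right (le_mul_of_one_le_right (by positivity) h2ρ)
          (by positivity)

theorem statement_12 [Nonempty Ω]
    (Φ : Ω → H) (hΦ : ∀ z : Ω, ‖Φ z‖ ≤ 1)
    (x : ℕ → Ω)
    (hgreedy : ∀ (i : ℕ) (z : Ω),
      powerFun Φ (Xset x i) z ≤ powerFun Φ (Xset x i) (x (i + 1)))
    (C ρ : ℝ) (hC : 0 < C) (hρ : 0 < ρ)
    (hcov : ∀ n : ℕ, 1 ≤ n →
      HasCover (acx (Set.range Φ)) n (C * (n : ℝ) ^ (-ρ - 1 / 2))) :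
    ∀ n : ℕ, 1 ≤ n →
      (⨆ z : Ω, powerFun Φ (Xset x (2 * n)) z)
        ≤ Real.sqrt 5 * C * (2 : ℝ) ^ ρ * ((2 * n : ℕ) : ℝ) ^ (-ρ) :=
  statement_12_general Φ x hgreedy C ρ hC hρ hcov
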